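/- arXiv:2410.06383 — 4 statements merged into one kernel-verified Lean document; each statement's English description precedes it below -/
import Mathlib

section
/- For all real b > 0, c > 0 and α > 0: the integral ∫₀^∞ (b^{1+α}/Γ(1+α)) · y^α · exp(−b·y − c·y²) dy is at most 1 and at least exp(−c·b^{1/2}) · (1 − Γ(1+α, b^{5/4})/Γ(1+α)), where Γ(1+α, x) = ∫ₓ^∞ ξ^α e^{−ξ} dξ is the upper incomplete Gamma function. -/
/-!
Write `f(y) = y^α e^{-by-cy²}` and `g(y) = y^α e^{-by}`; the substitution `ξ = by` gives
`∫_a^∞ g = b^{-(1+α)} Γ(1+α, ab)`, so the normalised integral of `g` over `(0, ∞)` is `1`.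
Since `f ≤ g`, the upper bound follows. On `(0, r]` we have `f ≥ e^{-cr²} g`, and
`b^{1+α} ∫_0^r g = Γ(1+α) - Γ(1+α, br)`; the choice `r = b^{1/4}` gives the lower bound.
-/

open MeasureTheory Set

/-- Upper incomplete Gamma function `Γ(s, x) = ∫ₓ^∞ ξ^{s−1} e^{−ξ} dξ`
(here given directly for exponent `α`, i.e. `Γ(1+α, x) = ∫ₓ^∞ ξ^α e^{−ξ} dξ`). -/
noncomputable def upperIncGamma (α x : ℝ) : ℝ :=
  ∫ ξ in Ioi x, ξ ^ α * Real.exp (-ξ)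

open Real

section

variable {α b : ℝ}

theorem upperIncGamma_zero (hα : -1 < α) : upperIncGamma α 0 = Gamma (1 + α) := by
  rw [Gamma_eq_integral (by linarith), upperIncGamma]
  refine setIntegral_congr_fun measurableSet_Ioi fun ξ _ => ?_
  rw [add_sub_cancel_left, mul_comm]

theorem integrableOn_rpow_mul_exp_neg_mul (hα : -1 < α) (hb : 0 < b) :
    IntegrableOn (fun y : ℝ => y ^ α * exp (-(b * y))) (Ioi 0) := by
  simpa only [rpow_one, neg_mul] using integrableOn_rpow_mul_exp_neg_mul_rpow hα one_pos hb

theorem integral_Ioi_rpow_mul_exp_neg_mul (hb : 0 < b) {a : ℝ} (ha : 0 ≤ a) :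
    ∫ y in Ioi a, y ^ α * exp (-(b * y)) = b ^ (-(1 + α)) * upperIncGamma α (b * a) := by
  have hsubst := integral_comp_mul_left_Ioi (fun ξ : ℝ => ξ ^ α * exp (-ξ)) a hb
  have hpull : ∫ y in Ioi a, (b * y) ^ α * exp (-(b * y))
      = b ^ α * ∫ y in Ioi a, y ^ α * exp (-(b * y)) := by
    rw [← integral_const_mul]
    refine setIntegral_congr_fun measurableSet_Ioi fun y hy => ?_
    rw [mul_rpow hb.le (ha.trans (le_of_lt hy)), mul_assoc]
  rw [hpull, smul_eq_mul, ← upperIncGamma] at hsubst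
  rw [neg_add, rpow_add hb, rpow_neg_one, rpow_neg hb.le, mul_comm b⁻¹, mul_assoc, ← hsubst,
    inv_mul_cancel_left₀ (rpow_pos_of_pos hb α).ne']

theorem integral_Ioc_rpow_mul_exp_neg_mul (hα : -1 < α) (hb : 0 < b) {r : ℝ} (hr : 0 ≤ r) :
    ∫ y in Ioc 0 r, y ^ α * exp (-(b * y))
      = b ^ (-(1 + α)) * (Gamma (1 + α) - upperIncGamma α (b * r)) := by
  rw [← intervalIntegral.integral_of_le hr,
    ← intervalIntegral.integral_Ioi_sub_Ioi (integrableOn_rpow_mul_exp_neg_mul hα hb) hr,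
    integral_Ioi_rpow_mul_exp_neg_mul hb le_rfl, integral_Ioi_rpow_mul_exp_neg_mul hb hr,
    mul_zero, upperIncGamma_zero hα, mul_sub]

variable {c : ℝ}

theorem exp_neg_mul_sub_mul_sq_le (hc : 0 ≤ c) (y : ℝ) :
    exp (-b * y - c * y ^ 2) ≤ exp (-(b * y)) :=
  exp_le_exp.mpr (by nlinarith [sq_nonneg y])

theorem integrableOn_rpow_mul_exp_neg_mul_sub_mul_sq (hα : -1 < α) (hb : 0 < b) (hc : 0 ≤ c) :
    IntegrableOn (fun y : ℝ => y ^ α * exp (-b * y - c * y ^ 2)) (Ioi 0) := by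
  refine (integrableOn_rpow_mul_exp_neg_mul hα hb).mono' (by fun_prop) ?_
  filter_upwards [ae_restrict_mem measurableSet_Ioi] with y (hy : 0 < y)
  rw [norm_of_nonneg (by positivity)]
  exact mul_le_mul_of_nonneg_left (exp_neg_mul_sub_mul_sq_le hc y) (by positivity)

theorem integral_rpow_mul_exp_neg_mul_sub_mul_sq_le (hα : -1 < α) (hb : 0 < b) (hc : 0 ≤ c) :
    ∫ y in Ioi 0, y ^ α * exp (-b * y - c * y ^ 2) ≤ b ^ (-(1 + α)) * Gamma (1 + α) := by
  calc ∫ y in Ioi 0, y ^ α * exp (-b * y - c * y ^ 2)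
      ≤ ∫ y in Ioi 0, y ^ α * exp (-(b * y)) :=
        setIntegral_mono_on (integrableOn_rpow_mul_exp_neg_mul_sub_mul_sq hα hb hc)
          (integrableOn_rpow_mul_exp_neg_mul hα hb) measurableSet_Ioi fun y (hy : 0 < y) =>
            mul_le_mul_of_nonneg_left (exp_neg_mul_sub_mul_sq_le hc y) (by positivity)
    _ = b ^ (-(1 + α)) * Gamma (1 + α) := by
        rw [integral_Ioi_rpow_mul_exp_neg_mul hb le_rfl, mul_zero, upperIncGamma_zero hα]

theorem le_integral_rpow_mul_exp_neg_mul_sub_mul_sq (hα : -1 < α) (hb : 0 < b) (hc : 0 ≤ c)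
    {r : ℝ} (hr : 0 ≤ r) :
    exp (-(c * r ^ 2)) * (b ^ (-(1 + α)) * (Gamma (1 + α) - upperIncGamma α (b * r)))
      ≤ ∫ y in Ioi 0, y ^ α * exp (-b * y - c * y ^ 2) := by
  have hf := integrableOn_rpow_mul_exp_neg_mul_sub_mul_sq hα hb hc
  have hdamp : ∀ y ∈ Ioc 0 r,
      exp (-(c * r ^ 2)) * (y ^ α * exp (-(b * y))) ≤ y ^ α * exp (-b * y - c * y ^ 2) := by
    rintro y ⟨hy0, hyr⟩
    have hsq : c * y ^ 2 ≤ c * r ^ 2 := mul_le_mul_of_nonneg_left (by nlinarith) hc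
    rw [mul_left_comm, ← exp_add]
    exact mul_le_mul_of_nonneg_left (exp_le_exp.mpr (by linarith)) (by positivity)
  calc exp (-(c * r ^ 2)) * (b ^ (-(1 + α)) * (Gamma (1 + α) - upperIncGamma α (b * r)))
      = ∫ y in Ioc 0 r, exp (-(c * r ^ 2)) * (y ^ α * exp (-(b * y))) := by
        rw [integral_const_mul, integral_Ioc_rpow_mul_exp_neg_mul hα hb hr]
    _ ≤ ∫ y in Ioc 0 r, y ^ α * exp (-b * y - c * y ^ 2) :=
        setIntegral_mono_on
          (((integrableOn_rpow_mul_exp_neg_mul hα hb).mono_set Ioc_subset_Ioi_self).const_mul _)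
          (hf.mono_set Ioc_subset_Ioi_self) measurableSet_Ioc hdamp
    _ ≤ ∫ y in Ioi 0, y ^ α * exp (-b * y - c * y ^ 2) :=
        setIntegral_mono_set hf
          (ae_restrict_of_forall_mem measurableSet_Ioi fun y (hy : 0 < y) => by positivity)
          Ioc_subset_Ioi_self.eventuallyLE

end

theorem stmt3 (b c α : ℝ) (hb : 0 < b) (hc : 0 < c) (hα : 0 < α) :
    (∫ y in Ioi (0:ℝ),
        b ^ (1 + α) / Real.Gamma (1 + α) * y ^ α * Real.exp (-b * y - c * y ^ 2)) ≤ 1 ∧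
    Real.exp (-c * b ^ ((1:ℝ)/2)) * (1 - upperIncGamma α (b ^ ((5:ℝ)/4)) / Real.Gamma (1 + α)) ≤
      ∫ y in Ioi (0:ℝ),
        b ^ (1 + α) / Real.Gamma (1 + α) * y ^ α * Real.exp (-b * y - c * y ^ 2) := by
  have hα' : -1 < α := by linarith
  have hΓ : 0 < Gamma (1 + α) := Gamma_pos_of_pos (by linarith)
  have hnorm : b ^ (1 + α) * b ^ (-(1 + α)) = 1 := by
    rw [rpow_neg hb.le, mul_inv_cancel₀ (rpow_pos_of_pos hb _).ne']
  simp_rw [mul_assoc (b ^ (1 + α) / Gamma (1 + α)), integral_const_mul]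
  have hK : 0 ≤ b ^ (1 + α) / Gamma (1 + α) := by positivity
  refine ⟨?_, ?_⟩
  · calc _ ≤ b ^ (1 + α) / Gamma (1 + α) * (b ^ (-(1 + α)) * Gamma (1 + α)) :=
          mul_le_mul_of_nonneg_left
            (integral_rpow_mul_exp_neg_mul_sub_mul_sq_le hα' hb hc.le) hK
      _ = 1 := by field_simp; exact hnorm
  · have hr : (b ^ ((1:ℝ)/4)) ^ 2 = b ^ ((1:ℝ)/2) := by
      rw [← rpow_natCast, ← rpow_mul hb.le]; norm_num
    have hbr : b * b ^ ((1:ℝ)/4) = b ^ ((5:ℝ)/4) := by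
      rw [← rpow_one_add' hb.le (by norm_num)]; norm_num
    have key := le_integral_rpow_mul_exp_neg_mul_sub_mul_sq hα' hb hc.le
      (rpow_nonneg hb.le ((1:ℝ)/4))
    rw [hr, hbr] at key
    rw [neg_mul]
    calc _ = b ^ (1 + α) / Gamma (1 + α) * (exp (-(c * b ^ ((1:ℝ)/2)))
          * (b ^ (-(1 + α)) * (Gamma (1 + α) - upperIncGamma α (b ^ ((5:ℝ)/4))))) := by
          rw [one_sub_div hΓ.ne']
          linear_combination -(exp (-(c * b ^ ((1:ℝ)/2)))
            * (Gamma (1 + α) - upperIncGamma α (b ^ ((5:ℝ)/4))) / Gamma (1 + α)) * hnorm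
      _ ≤ _ := mul_le_mul_of_nonneg_left key hK
end

section
/- Let c_n, γ_n, δ_n be positive real sequences with c_n → ∞ and c_n^{1/2}·γ_n/δ_n → ρ ∈ (0,∞), and let α > 0. Then lim_{n→∞} (1/Ai(c_n)) · ∫₀^∞ (δ_n^{1+α}/Γ(1+α)) · e^{−δ_n x} · x^α · Ai(c_n + γ_n x) dx = (1+ρ)^{−1−α}, where Ai is the Airy function. -/
/-!
After the substitution `t = δₙ x` the quantity becomes
`∫ e^{-t} t^α / Γ(1+α) · Ai(cₙ + βₙ t) / Ai(cₙ) dt` with `βₙ = γₙ / δₙ`. The two-sided bounds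
make `Ai` asymptotic to the envelope `E(y) = y^{-1/4} e^{-(2/3) y^{3/2}} / √(4π)`, and since
`(2/3)((c+s)^{3/2} - c^{3/2})` lies between `√c · s` and `√(c+s) · s`, the ratio
`Ai(cₙ + βₙ t) / Ai(cₙ)` tends to `e^{-ρt}`. As `E` is decreasing, the ratio is eventually at
most `2`, so dominated convergence applies and the limit is
`∫ e^{-(1+ρ)t} t^α / Γ(1+α) dt = (1+ρ)^{-1-α}`.
-/

open MeasureTheory Set Filter Topology

noncomputable def airyEnvelope (y : ℝ) : ℝ :=
  y ^ (-(1:ℝ)/4) * (Real.exp (-(2/3) * y ^ ((3:ℝ)/2)) / Real.sqrt (4 * Real.pi))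

lemma airyEnvelope_pos {y : ℝ} (hy : 0 < y) : 0 < airyEnvelope y := by
  unfold airyEnvelope
  positivity

lemma airyEnvelope_le_of_le {a y : ℝ} (ha : 0 < a) (hay : a ≤ y) :
    airyEnvelope y ≤ airyEnvelope a := by
  have hpow : a ^ ((3:ℝ)/2) ≤ y ^ ((3:ℝ)/2) := by gcongr
  unfold airyEnvelope
  gcongr ?_ * (Real.exp ?_ / _)
  · exact Real.rpow_le_rpow_of_nonpos ha hay (by norm_num)
  · linarith

lemma airyEnvelope_div {a b : ℝ} (ha : 0 < a) (hb : 0 < b) :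
    airyEnvelope b / airyEnvelope a =
      (b / a) ^ (-(1:ℝ)/4) * Real.exp (-(2/3 * (b ^ ((3:ℝ)/2) - a ^ ((3:ℝ)/2)))) := by
  have hexp : Real.exp (-(2/3) * b ^ ((3:ℝ)/2)) = Real.exp (-(2/3) * a ^ ((3:ℝ)/2)) *
      Real.exp (-(2/3 * (b ^ ((3:ℝ)/2) - a ^ ((3:ℝ)/2)))) := by
    rw [← Real.exp_add]; ring_nf
  rw [div_eq_iff (airyEnvelope_pos ha).ne', airyEnvelope, airyEnvelope, hexp, Real.div_rpow hb.le ha.le]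
  field_simp [(Real.rpow_pos_of_pos ha (-(1:ℝ)/4)).ne']

lemma rpow_three_halves_eq_sqrt_pow {a : ℝ} (ha : 0 ≤ a) : a ^ ((3:ℝ)/2) = √a ^ 3 := by
  rw [Real.sqrt_eq_rpow, ← Real.rpow_natCast, ← Real.rpow_mul ha]
  norm_num

lemma two_thirds_mul_rpow_three_halves_sub_mem_Icc {a b : ℝ} (ha : 0 ≤ a) (hab : a ≤ b) :
    2/3 * (b ^ ((3:ℝ)/2) - a ^ ((3:ℝ)/2)) ∈ Icc (√a * (b - a)) (√b * (b - a)) := by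
  have hb : 0 ≤ b := ha.trans hab
  rw [rpow_three_halves_eq_sqrt_pow ha, rpow_three_halves_eq_sqrt_pow hb,
    ← Real.sq_sqrt ha, ← Real.sq_sqrt hb, Real.sqrt_sq (Real.sqrt_nonneg a),
    Real.sqrt_sq (Real.sqrt_nonneg b)]
  have hu := Real.sqrt_nonneg a
  have huv : √a ≤ √b := Real.sqrt_le_sqrt hab
  constructor
  · nlinarith [mul_nonneg (sq_nonneg (√b - √a)) (by linarith : 0 ≤ 2 * √b + √a)]
  · nlinarith [mul_nonneg (sq_nonneg (√b - √a)) (by linarith : 0 ≤ √b + 2 * √a)]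

theorem tendsto_airyEnvelope_add_div {ι : Type*} {l : Filter ι} {a s : ι → ℝ} {L : ℝ}
    (ha : Tendsto a l atTop) (hs : ∀ i, 0 ≤ s i)
    (hL : Tendsto (fun i => √(a i) * s i) l (𝓝 L)) :
    Tendsto (fun i => airyEnvelope (a i + s i) / airyEnvelope (a i)) l
      (𝓝 (Real.exp (-L))) := by
  have hpos : ∀ᶠ i in l, 0 < a i := ha.eventually_gt_atTop 0
  have hsa : Tendsto (fun i => s i / a i) l (𝓝 0) := by
    refine (hL.div_atTop (ha.atTop_mul_atTop₀ (Real.tendsto_sqrt_atTop.comp ha))).congr' ?_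
    filter_upwards [hpos] with i hi
    have hsqrt := Real.sqrt_pos.2 hi
    simp only [Function.comp_apply]
    field_simp
  have hratio : Tendsto (fun i => (a i + s i) / a i) l (𝓝 1) := by
    refine (add_zero (1:ℝ) ▸ tendsto_const_nhds.add hsa).congr' ?_
    filter_upwards [hpos] with i hi
    rw [add_div, div_self hi.ne']
  have hupper : Tendsto (fun i => √(a i + s i) * s i) l (𝓝 L) := by
    refine (one_mul L ▸ Real.sqrt_one ▸ hratio.sqrt.mul hL).congr' ?_
    filter_upwards [hpos] with i hi
    rw [← mul_assoc, ← Real.sqrt_mul (div_nonneg (by linarith [hs i]) hi.le),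
      div_mul_cancel₀ _ hi.ne']
  have hgap : Tendsto (fun i => 2/3 * ((a i + s i) ^ ((3:ℝ)/2) - a i ^ ((3:ℝ)/2))) l (𝓝 L) := by
    have hbounds : ∀ᶠ i in l, 2/3 * ((a i + s i) ^ ((3:ℝ)/2) - a i ^ ((3:ℝ)/2)) ∈
        Icc (√(a i) * s i) (√(a i + s i) * s i) := by
      filter_upwards [hpos] with i hi
      simpa only [add_sub_cancel_left] using
        two_thirds_mul_rpow_three_halves_sub_mem_Icc hi.le (le_add_of_nonneg_right (hs i))
    exact tendsto_of_tendsto_of_tendsto_of_le_of_le' hL hupper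
      (hbounds.mono fun _ h => h.1) (hbounds.mono fun _ h => h.2)
  have hlim := (Real.one_rpow (-(1:ℝ)/4) ▸ hratio.rpow_const (Or.inl one_ne_zero)).mul
    ((Real.continuous_exp.tendsto _).comp hgap.neg)
  rw [one_mul] at hlim
  refine hlim.congr' ?_
  filter_upwards [hpos] with i hi
  rw [airyEnvelope_div hi (by linarith [hs i])]
  rfl

section AiryLike

variable {f : ℝ → ℝ}

theorem tendsto_div_airyEnvelope
    (hlb : ∀ᶠ y in atTop, (1 - 3/2 * y ^ (-(3:ℝ)/2)) * airyEnvelope y ≤ f y)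
    (hub : ∀ᶠ y in atTop, f y ≤ airyEnvelope y) :
    Tendsto (fun y => f y / airyEnvelope y) atTop (𝓝 1) := by
  have hcorr : Tendsto (fun y : ℝ => 1 - 3/2 * y ^ (-(3:ℝ)/2)) atTop (𝓝 1) := by
    have h := (tendsto_rpow_neg_atTop (by norm_num : (0:ℝ) < 3/2)).const_mul (3/2 : ℝ)
    simpa only [mul_zero, sub_zero, neg_div] using tendsto_const_nhds.sub h
  refine tendsto_of_tendsto_of_tendsto_of_le_of_le' hcorr tendsto_const_nhds ?_ ?_ <;>
    filter_upwards [hlb, hub, eventually_gt_atTop 0] with y hlby huby hy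
  · exact (le_div_iff₀ (airyEnvelope_pos hy)).2 hlby
  · exact div_le_one_of_le₀ huby (airyEnvelope_pos hy).le

theorem tendsto_comp_add_div_of_tendsto_div_airyEnvelope {ι : Type*} {l : Filter ι}
    {a s : ι → ℝ} {L : ℝ} (hf : Tendsto (fun y => f y / airyEnvelope y) atTop (𝓝 1))
    (ha : Tendsto a l atTop) (hs : ∀ i, 0 ≤ s i)
    (hL : Tendsto (fun i => √(a i) * s i) l (𝓝 L)) :
    Tendsto (fun i => f (a i + s i) / f (a i)) l (𝓝 (Real.exp (-L))) := by
  have has : Tendsto (fun i => a i + s i) l atTop :=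
    tendsto_atTop_mono (fun i => le_add_of_nonneg_right (hs i)) ha
  have hlim := ((hf.comp has).mul (tendsto_airyEnvelope_add_div ha hs hL)).div
    (hf.comp ha) one_ne_zero
  rw [one_mul, div_one] at hlim
  refine hlim.congr' ?_
  filter_upwards [ha.eventually_gt_atTop 0] with i hi
  have h1 := (airyEnvelope_pos hi).ne'
  have h2 := (airyEnvelope_pos (add_pos_of_pos_of_nonneg hi (hs i))).ne'
  simp only [Pi.div_apply, Function.comp_apply]
  rw [div_mul_div_cancel₀ h2, div_div_div_cancel_right₀ h1]

theorem eventually_forall_ge_abs_div_le_two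
    (hf : Tendsto (fun y => f y / airyEnvelope y) atTop (𝓝 1))
    (hub : ∀ᶠ y in atTop, f y ≤ airyEnvelope y) :
    ∀ᶠ a in atTop, ∀ y, a ≤ y → |f y / f a| ≤ 2 := by
  have hnear : ∀ᶠ y in atTop, 0 < y ∧ airyEnvelope y / 2 < f y ∧ f y ≤ airyEnvelope y := by
    filter_upwards [eventually_gt_atTop 0, hub,
      hf.eventually (lt_mem_nhds (by norm_num : (1:ℝ)/2 < 1))] with y hy huby hratio
    exact ⟨hy, by rwa [lt_div_iff₀ (airyEnvelope_pos hy), div_mul_eq_mul_div, one_mul] at hratio,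
      huby⟩
  obtain ⟨N, hN⟩ := eventually_atTop.1 hnear
  filter_upwards [eventually_ge_atTop N] with a ha y hay
  obtain ⟨ha0, hfa, -⟩ := hN a ha
  obtain ⟨hy0, hfy, hfy'⟩ := hN y (ha.trans hay)
  have hfa0 : 0 < f a := (half_pos (airyEnvelope_pos ha0)).trans hfa
  have hfy0 : 0 < f y := (half_pos (airyEnvelope_pos hy0)).trans hfy
  rw [abs_of_pos (div_pos hfy0 hfa0), div_le_iff₀ hfa0]
  linarith [airyEnvelope_le_of_le ha0 hay]

end AiryLike

theorem integral_Ioi_exp_neg_mul_rpow_comp_mul {δ : ℝ} (hδ : 0 < δ) (α : ℝ) (g : ℝ → ℝ) :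
    ∫ x in Ioi 0, δ ^ (1 + α) * Real.exp (-δ * x) * x ^ α * g (δ * x) =
      ∫ t in Ioi 0, Real.exp (-t) * t ^ α * g t := by
  have hpoint : ∀ x ∈ Ioi (0:ℝ), δ ^ (1 + α) * Real.exp (-δ * x) * x ^ α * g (δ * x) =
      δ * (Real.exp (-(δ * x)) * (δ * x) ^ α * g (δ * x)) := by
    intro x hx
    rw [Real.mul_rpow hδ.le (le_of_lt hx), Real.rpow_add hδ, Real.rpow_one, neg_mul]
    ring
  rw [setIntegral_congr_fun measurableSet_Ioi hpoint, integral_const_mul,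
    integral_comp_mul_left_Ioi (fun t => Real.exp (-t) * t ^ α * g t) 0 hδ, mul_zero,
    smul_eq_mul, mul_inv_cancel_left₀ hδ.ne']

theorem one_div_mul_integral_Ioi_comp_add_mul {δ : ℝ} (hδ : 0 < δ) (f : ℝ → ℝ) (a γ α : ℝ) :
    1 / f a * ∫ x in Ioi 0,
        δ ^ (1 + α) / Real.Gamma (1 + α) * Real.exp (-δ * x) * x ^ α * f (a + γ * x) =
      (Real.Gamma (1 + α))⁻¹ * ∫ t in Ioi 0, Real.exp (-t) * t ^ α * (f (a + γ / δ * t) / f a) := by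
  rw [← integral_Ioi_exp_neg_mul_rpow_comp_mul hδ, ← integral_const_mul, ← integral_const_mul]
  congr 1 with x
  rw [show γ / δ * (δ * x) = γ * x by field_simp [hδ.ne']]
  ring

theorem integral_exp_neg_mul_rpow_mul_exp_neg_mul {α ρ : ℝ} (hα : -1 < α) (hρ : -1 < ρ) :
    ∫ t in Ioi 0, Real.exp (-t) * t ^ α * Real.exp (-(ρ * t)) =
      Real.Gamma (1 + α) * (1 + ρ) ^ (-1 - α) := by
  have h1ρ : 0 < 1 + ρ := by linarith
  have hpoint : ∀ t ∈ Ioi (0:ℝ), Real.exp (-t) * t ^ α * Real.exp (-(ρ * t)) =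
      t ^ ((1 + α) - 1) * Real.exp (-((1 + ρ) * t)) := by
    intro t _
    rw [add_sub_cancel_left, mul_comm (Real.exp _), mul_assoc, ← Real.exp_add]
    ring_nf
  rw [setIntegral_congr_fun measurableSet_Ioi hpoint,
    Real.integral_rpow_mul_exp_neg_mul_Ioi (by linarith) h1ρ, one_div,
    Real.inv_rpow h1ρ.le, ← Real.rpow_neg h1ρ.le, neg_add', mul_comm]

theorem tendsto_integral_exp_neg_mul_rpow_mul {ι : Type*} {l : Filter ι}
    [l.IsCountablyGenerated] {α C : ℝ} (hα : -1 < α) {φ : ι → ℝ → ℝ} {ψ : ℝ → ℝ}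
    (hmeas : ∀ᶠ i in l, AEStronglyMeasurable (φ i) (volume.restrict (Ioi 0)))
    (hbound : ∀ᶠ i in l, ∀ t > 0, |φ i t| ≤ C)
    (hlim : ∀ t > 0, Tendsto (fun i => φ i t) l (𝓝 (ψ t))) :
    Tendsto (fun i => ∫ t in Ioi 0, Real.exp (-t) * t ^ α * φ i t) l
      (𝓝 (∫ t in Ioi 0, Real.exp (-t) * t ^ α * ψ t)) := by
  have hweight : ContinuousOn (fun t : ℝ => Real.exp (-t) * t ^ α) (Ioi 0) :=
    (Real.continuous_exp.comp continuous_neg).continuousOn.mul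
      fun t ht => (Real.continuousAt_rpow_const t α (Or.inl (ne_of_gt ht))).continuousWithinAt
  have hint : IntegrableOn (fun t : ℝ => Real.exp (-t) * t ^ α) (Ioi 0) := by
    simpa using Real.GammaIntegral_convergent (show 0 < α + 1 by linarith)
  refine tendsto_integral_filter_of_dominated_convergence (fun t => C * (Real.exp (-t) * t ^ α))
    ?_ ?_ (hint.const_mul C) ?_
  · filter_upwards [hmeas] with i hi
    exact (hweight.aestronglyMeasurable measurableSet_Ioi).mul hi
  · filter_upwards [hbound] with i hi
    refine (ae_restrict_iff' measurableSet_Ioi).2 (Eventually.of_forall fun t (ht : 0 < t) => ?_)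
    rw [norm_mul, Real.norm_of_nonneg (by positivity), mul_comm, Real.norm_eq_abs]
    exact mul_le_mul_of_nonneg_right (hi t ht) (by positivity)
  · exact (ae_restrict_iff' measurableSet_Ioi).2
      (Eventually.of_forall fun t ht => (hlim t ht).const_mul _)

theorem stmt4_general (Ai : ℝ → ℝ) (hAi : Continuous Ai)
    (hAi_lb : ∀ y : ℝ, ((3:ℝ)/2) ^ ((2:ℝ)/3) < y →
      (1 - (3/2) * y ^ (-(3:ℝ)/2)) * y ^ (-(1:ℝ)/4) *
        (Real.exp (-(2/3) * y ^ ((3:ℝ)/2)) / Real.sqrt (4 * Real.pi)) ≤ Ai y)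
    (hAi_ub : ∀ y : ℝ, ((3:ℝ)/2) ^ ((2:ℝ)/3) < y →
      Ai y ≤ y ^ (-(1:ℝ)/4) * (Real.exp (-(2/3) * y ^ ((3:ℝ)/2)) / Real.sqrt (4 * Real.pi)))
    (c γ δ : ℕ → ℝ) (hγ : ∀ n, 0 < γ n) (hδ : ∀ n, 0 < δ n)
    (hc_top : Tendsto c atTop atTop)
    (ρ : ℝ) (hρ : 0 < ρ)
    (hratio : Tendsto (fun n => (c n) ^ ((1:ℝ)/2) * γ n / δ n) atTop (nhds ρ))
    (α : ℝ) (hα : 0 < α) :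
    Tendsto (fun n =>
        (1 / Ai (c n)) *
          ∫ x in Ioi (0:ℝ),
            (δ n) ^ (1 + α) / Real.Gamma (1 + α) * Real.exp (-(δ n) * x) * x ^ α *
              Ai (c n + γ n * x))
      atTop (nhds ((1 + ρ) ^ (-1 - α))) := by
  have hub : ∀ᶠ y in atTop, Ai y ≤ airyEnvelope y :=
    (eventually_gt_atTop _).mono hAi_ub
  have hlb : ∀ᶠ y in atTop, (1 - 3/2 * y ^ (-(3:ℝ)/2)) * airyEnvelope y ≤ Ai y :=
    (eventually_gt_atTop _).mono fun y hy => (mul_assoc _ _ _).symm.trans_le (hAi_lb y hy)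
  have hAi_div := tendsto_div_airyEnvelope hlb hub
  have hβ : ∀ n, 0 < γ n / δ n := fun n => div_pos (hγ n) (hδ n)
  have hlim : ∀ t > 0, Tendsto (fun n => Ai (c n + γ n / δ n * t) / Ai (c n)) atTop
      (𝓝 (Real.exp (-(ρ * t)))) := fun t ht =>
    tendsto_comp_add_div_of_tendsto_div_airyEnvelope hAi_div hc_top
      (fun n => (mul_pos (hβ n) ht).le)
      ((hratio.mul_const t).congr fun n => by rw [Real.sqrt_eq_rpow]; ring)
  have hbound : ∀ᶠ n in atTop, ∀ t > 0, |Ai (c n + γ n / δ n * t) / Ai (c n)| ≤ 2 := by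
    filter_upwards [hc_top.eventually (eventually_forall_ge_abs_div_le_two hAi_div hub)]
      with n hn t ht
    exact hn _ (le_add_of_nonneg_right (mul_pos (hβ n) ht).le)
  have hmeas : ∀ n, AEStronglyMeasurable (fun t => Ai (c n + γ n / δ n * t) / Ai (c n))
      (volume.restrict (Ioi 0)) := fun n =>
    ((hAi.comp (by fun_prop)).div_const _).aestronglyMeasurable
  have key := (tendsto_integral_exp_neg_mul_rpow_mul (by linarith) (Eventually.of_forall hmeas)
    hbound hlim).const_mul (Real.Gamma (1 + α))⁻¹
  rw [integral_exp_neg_mul_rpow_mul_exp_neg_mul (by linarith) (by linarith),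
    inv_mul_cancel_left₀ (Real.Gamma_pos_of_pos (by linarith)).ne'] at key
  exact key.congr fun n => (one_div_mul_integral_Ioi_comp_add_mul (hδ n) Ai _ _ _).symm

/-- the Airy-kernel Laplace asymptotics. Since the Airy function is not
available in Mathlib, `Ai` is any function satisfying the standard asymptotic bounds
`(1 − (3/2)y^{−3/2}) y^{−1/4} e^{−(2/3)y^{3/2}}/√(4π) ≤ Ai(y) ≤ y^{−1/4} e^{−(2/3)y^{3/2}}/√(4π)`
for `y > (3/2)^{2/3}`. -/
theorem stmt4 (Ai : ℝ → ℝ) (hAi : Continuous Ai)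
    (hAi_lb : ∀ y : ℝ, ((3:ℝ)/2) ^ ((2:ℝ)/3) < y →
      (1 - (3/2) * y ^ (-(3:ℝ)/2)) * y ^ (-(1:ℝ)/4) *
        (Real.exp (-(2/3) * y ^ ((3:ℝ)/2)) / Real.sqrt (4 * Real.pi)) ≤ Ai y)
    (hAi_ub : ∀ y : ℝ, ((3:ℝ)/2) ^ ((2:ℝ)/3) < y →
      Ai y ≤ y ^ (-(1:ℝ)/4) * (Real.exp (-(2/3) * y ^ ((3:ℝ)/2)) / Real.sqrt (4 * Real.pi)))
    (c γ δ : ℕ → ℝ) (hc : ∀ n, 0 < c n) (hγ : ∀ n, 0 < γ n) (hδ : ∀ n, 0 < δ n)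
    (hc_top : Tendsto c atTop atTop)
    (ρ : ℝ) (hρ : 0 < ρ)
    (hratio : Tendsto (fun n => (c n) ^ ((1:ℝ)/2) * γ n / δ n) atTop (nhds ρ))
    (α : ℝ) (hα : 0 < α) :
    Tendsto (fun n =>
        (1 / Ai (c n)) *
          ∫ x in Ioi (0:ℝ),
            (δ n) ^ (1 + α) / Real.Gamma (1 + α) * Real.exp (-(δ n) * x) * x ^ α *
              Ai (c n + γ n * x))
      atTop (nhds ((1 + ρ) ^ (-1 - α))) :=
  stmt4_general Ai hAi hAi_lb hAi_ub c γ δ hγ hδ hc_top ρ hρ hratio α hα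
end

section
/- Let β > 1, μ > 0, and let u: [0,1] → ℝ be a C² function on (0,1), continuous on [0,1], satisfying x(1−x)u''(x) + (α(1−x) − βx)u'(x) − (λτ + μx)u(x) = 0 on (0,1) for some α, λ, τ ≥ 0, with u(1) = 1 and u'(1) = −(λτ+μ)/β, where λτ + μ > 0. Then u is strictly decreasing on [0,1]. -/
/-!
At an interior critical point where `u > 0` the equation reads `x(1-x) u'' = (λτ + μx) u > 0`,
so `u` has no interior local maximum with positive value, and `u'(1) < 0` rules out a maximum of
`u` on `[c, 1]` at the right endpoint. Since `u 1 = 1 > 0`, the maximum of `u` on any `[c, 1]` is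
therefore attained only at `c`, which is strict decrease.
-/

open Set Filter Topology

theorem not_isLocalMax_of_deriv_deriv_pos {f : ℝ → ℝ} {x₀ : ℝ}
    (hf : 0 < deriv (deriv f) x₀) (hd : deriv f x₀ = 0) (hc : ContinuousAt f x₀) : ¬IsLocalMax f x₀ := by
  intro hmax
  have hderiv : ∀ᶠ y in 𝓝[>] x₀, 0 < deriv f y :=
    deriv_pos_right_of_sign_deriv
      (nhdsWithin_le_nhds (eventually_nhdsWithin_sign_eq_of_deriv_pos hf hd))
  obtain ⟨b, hx₀b : x₀ < b, hsub⟩ :=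
    mem_nhdsGT_iff_exists_Ioo_subset.1 (hderiv.and (nhdsWithin_le_nhds hmax))
  obtain ⟨y, hy⟩ := nonempty_Ioo.2 hx₀b
  have hcont : ContinuousOn f (Icc x₀ y) := by
    intro z hz
    rcases hz.1.eq_or_lt with rfl | hx₀z
    · exact hc.continuousWithinAt
    · exact (differentiableAt_of_deriv_ne_zero
        (hsub ⟨hx₀z, hz.2.trans_lt hy.2⟩).1.ne').continuousAt.continuousWithinAt
  have hmono : StrictMonoOn f (Icc x₀ y) :=
    strictMonoOn_of_deriv_pos (convex_Icc x₀ y) hcont fun z hz => by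
      rw [interior_Icc] at hz
      exact (hsub ⟨hz.1, hz.2.trans hy.2⟩).1
  have hlt : f x₀ < f y := hmono (left_mem_Icc.2 hy.1.le) (right_mem_Icc.2 hy.1.le) hy.1
  exact (hsub hy).2.not_gt hlt

theorem deriv_nonneg_of_isMaxOn_Icc_right {f : ℝ → ℝ} {a b : ℝ} (hab : a < b)
    (hmax : IsMaxOn f (Icc a b) b) (hf : DifferentiableAt ℝ f b) : 0 ≤ deriv f b := by
  have hseg : segment ℝ b a ⊆ Icc a b := by rw [segment_symm, segment_eq_Icc hab.le]
  have h := hmax.localize.hasFDerivWithinAt_nonpos hf.hasDerivAt.hasFDerivAt.hasFDerivWithinAt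
    (sub_mem_posTangentConeAt_of_segment_subset hseg)
  rw [ContinuousLinearMap.toSpanSingleton_apply, smul_eq_mul] at h
  nlinarith

theorem strictAntiOn_Icc_of_forall_not_isLocalMax {f : ℝ → ℝ} {a b : ℝ}
    (hf : ContinuousOn f (Icc a b)) (hb : deriv f b < 0) (hfb : 0 < f b)
    (hmax : ∀ x ∈ Ioo a b, 0 < f x → ¬IsLocalMax f x) : StrictAntiOn f (Icc a b) := by
  intro c hc y hy hcy
  have hcb : c < b := hcy.trans_le hy.2
  have hmax_left : ∀ m ∈ Icc c b, IsMaxOn f (Icc c b) m → m = c := by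
    intro m hm hm_max
    rcases hm.1.eq_or_lt with rfl | hcm
    · rfl
    rcases hm.2.eq_or_lt with rfl | hmb
    · exact absurd (deriv_nonneg_of_isMaxOn_Icc_right hcm hm_max
        (differentiableAt_of_deriv_ne_zero hb.ne)) hb.not_ge
    · exact absurd (hm_max.isLocalMax (Icc_mem_nhds hcm hmb))
        (hmax m ⟨hc.1.trans_lt hcm, hmb⟩ (hfb.trans_le (hm_max (right_mem_Icc.2 hcb.le))))
  obtain ⟨m, hm, hm_max⟩ := isCompact_Icc.exists_isMaxOn (nonempty_Icc.2 hcb.le)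
    (hf.mono (Icc_subset_Icc_left hc.1))
  obtain rfl := hmax_left m hm hm_max
  have hy' : y ∈ Icc m b := ⟨hcy.le, hy.2⟩
  exact (hm_max hy').lt_of_ne fun hym =>
    hcy.ne' (hmax_left y hy' fun z hz => (hm_max hz).trans hym.symm.le)

theorem stmt6_general (β μ α lam τ : ℝ) (hβ : 1 < β)
    (hlam : 0 ≤ lam) (hτ : 0 ≤ τ) (hpos : 0 < lam * τ + μ)
    (u : ℝ → ℝ)
    (hcont : ContinuousOn u (Icc 0 1))
    (hode : ∀ x ∈ Ioo (0:ℝ) 1,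
      x * (1 - x) * iteratedDeriv 2 u x + (α * (1 - x) - β * x) * deriv u x
        - (lam * τ + μ * x) * u x = 0)
    (hu1 : u 1 = 1)
    (hu'1 : deriv u 1 = -(lam * τ + μ) / β) :
    StrictAntiOn u (Icc 0 1) := by
  have hno_max : ∀ x ∈ Ioo (0:ℝ) 1, 0 < u x → ¬IsLocalMax u x := by
    intro x hx hux hmax
    have hd : deriv u x = 0 := hmax.deriv_eq_zero
    have hx_pos : 0 < x * (1 - x) := mul_pos hx.1 (sub_pos.2 hx.2)
    -- `λτ + μx = (1 - x) λτ + x (λτ + μ)`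
    have hcoef : 0 < lam * τ + μ * x := by
      have := add_pos_of_nonneg_of_pos
        (mul_nonneg (sub_pos.2 hx.2).le (mul_nonneg hlam hτ)) (mul_pos hx.1 hpos)
      linarith
    have heq := hode x hx
    rw [iteratedDeriv_succ, iteratedDeriv_one, hd, mul_zero, add_zero, sub_eq_zero] at heq
    have hdd : 0 < deriv (deriv u) x :=
      pos_of_mul_pos_right (heq ▸ mul_pos hcoef hux) hx_pos.le
    exact not_isLocalMax_of_deriv_deriv_pos hdd hd
      (hcont.continuousAt (Icc_mem_nhds hx.1 hx.2)) hmax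
  have hd1 : deriv u 1 < 0 := by
    rw [hu'1]
    exact div_neg_of_neg_of_pos (neg_neg_of_pos hpos) (zero_lt_one.trans hβ)
  exact strictAntiOn_Icc_of_forall_not_isLocalMax hcont hd1 (by norm_num [hu1]) hno_max

theorem stmt6 (β μ α lam τ : ℝ) (hβ : 1 < β) (hμ : 0 < μ)
    (hα : 0 ≤ α) (hlam : 0 ≤ lam) (hτ : 0 ≤ τ) (hpos : 0 < lam * τ + μ)
    (u : ℝ → ℝ)
    (hsmooth : ContDiffOn ℝ 2 u (Ioo 0 1))
    (hcont : ContinuousOn u (Icc 0 1))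
    (hode : ∀ x ∈ Ioo (0:ℝ) 1,
      x * (1 - x) * iteratedDeriv 2 u x + (α * (1 - x) - β * x) * deriv u x
        - (lam * τ + μ * x) * u x = 0)
    (hu1 : u 1 = 1)
    (hu'1 : deriv u 1 = -(lam * τ + μ) / β) :
    StrictAntiOn u (Icc 0 1) :=
  stmt6_general β μ α lam τ hβ hlam hτ hpos u hcont hode hu1 hu'1
end

section
/- Fix β > 1, μ > 0, λ > 0, and sequences τ_n → 0, α_n → 0 with τ_n < 1 and sup_n λτ_n < ∞. Define a_n(0)=1, a_n(1)=(λτ_n+μ)/β, and a_n(k) = c_n(k−1)a_n(k−1) − d_n(k)a_n(k−2) for k ≥ 2, where c_n(k−1) = (λτ_n + μ + (k−1)(k+α_n+β−2))/(k(β+k−1)) and d_n(k) = μ/(k(β+k−1)). Then for each ε > 0 there exist C_ε > 0 and N_ε ∈ ℕ such that |a_n(k)| ≤ C_ε · k^{−(2−ε)} for all k ≥ 1 and all n ≥ N_ε. -/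
/-!
Since the coefficients are eventually nonnegative, `|a k| ≤ c_k |a (k-1)| + d_k |a (k-2)|`.
Expanding, `c_k = 1 - (2 - α)/k + O(1/k²)` and `d_k = O(1/k²)`, so `w k = k^(ε-2)` is a
supersolution of this majorising recursion, `c_k w (k-1) + d_k w (k-2) ≤ w k`, as soon as
`α ≤ ε/4` and `k` is large compared with `(β + s + μ)/ε`. For large `n` the parameters
`s = λτ_n + μ` and `α_n` lie in fixed compact ranges, so both this threshold and the crude bound
`|a k| ≤ B^k` below it are uniform in `n`.
-/

open Filter Real

/-- `cCoeff β s α k` is the paper's `c_n(k-1)` and `dCoeff β μ k` its `d_n(k)`,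
with `s = λτ_n + μ` and `α = α_n`. -/
noncomputable def cCoeff (β s α x : ℝ) : ℝ := (s + (x - 1) * (x + α + β - 2)) / (x * (β + x - 1))

noncomputable def dCoeff (β μ x : ℝ) : ℝ := μ / (x * (β + x - 1))

section Comparison

variable {a p q : ℕ → ℝ}

theorem abs_le_pow_of_abs_le_add {B : ℝ} (hB : 1 ≤ B) (h0 : |a 0| ≤ 1) (h1 : |a 1| ≤ B)
    (hp : ∀ k, 2 ≤ k → 0 ≤ p k) (hq : ∀ k, 2 ≤ k → 0 ≤ q k)
    (hpq : ∀ k, 2 ≤ k → p k + q k ≤ B)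
    (hrec : ∀ k, 2 ≤ k → |a k| ≤ p k * |a (k - 1)| + q k * |a (k - 2)|) :
    ∀ k, |a k| ≤ B ^ k := by
  intro k
  induction k using Nat.strong_induction_on with
  | _ k ih =>
    match k with
    | 0 => simpa using h0
    | 1 => simpa using h1
    | k + 2 =>
      have hk1 : |a (k + 1)| ≤ B ^ (k + 1) := ih (k + 1) (by omega)
      have hk : |a k| ≤ B ^ (k + 1) := (ih k (by omega)).trans (pow_le_pow_right₀ hB k.le_succ)
      have hp2 := hp (k + 2) (by omega)
      have hq2 := hq (k + 2) (by omega)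
      calc |a (k + 2)| ≤ p (k + 2) * |a (k + 1)| + q (k + 2) * |a k| := hrec (k + 2) (by omega)
        _ ≤ (p (k + 2) + q (k + 2)) * B ^ (k + 1) := by nlinarith
        _ ≤ B * B ^ (k + 1) := by gcongr; exact hpq _ (by omega)
        _ = B ^ (k + 2) := by ring

theorem abs_le_mul_of_abs_le_add {w : ℕ → ℝ} {C : ℝ} {K : ℕ} (hK : 2 ≤ K) (hC : 0 ≤ C)
    (hp : ∀ k, 2 ≤ k → 0 ≤ p k) (hq : ∀ k, 2 ≤ k → 0 ≤ q k)
    (hrec : ∀ k, 2 ≤ k → |a k| ≤ p k * |a (k - 1)| + q k * |a (k - 2)|)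
    (hw : ∀ k, K < k → p k * w (k - 1) + q k * w (k - 2) ≤ w k)
    (hbase : ∀ k, 1 ≤ k → k ≤ K → |a k| ≤ C * w k) :
    ∀ k, 1 ≤ k → |a k| ≤ C * w k := by
  intro k
  induction k using Nat.strong_induction_on with
  | _ k ih =>
    intro hk
    rcases le_or_gt k K with hkK | hKk
    · exact hbase k hk hkK
    have h1 := ih (k - 1) (by omega) (by omega)
    have h2 := ih (k - 2) (by omega) (by omega)
    calc |a k| ≤ p k * |a (k - 1)| + q k * |a (k - 2)| := hrec k (by omega)
      _ ≤ p k * (C * w (k - 1)) + q k * (C * w (k - 2)) := by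
        gcongr
        exacts [hp k (by omega), hq k (by omega)]
      _ = C * (p k * w (k - 1) + q k * w (k - 2)) := by ring
      _ ≤ C * w k := by gcongr; exact hw k hKk

end Comparison

theorem abs_mul_sub_mul_le {c d u v : ℝ} (hc : 0 ≤ c) (hd : 0 ≤ d) :
    |c * u - d * v| ≤ c * |u| + d * |v| := by
  calc |c * u - d * v| ≤ |c * u| + |d * v| := abs_sub _ _
    _ = c * |u| + d * |v| := by rw [abs_mul, abs_mul, abs_of_nonneg hc, abs_of_nonneg hd]

section Coefficients

variable {β μ s α x : ℝ}

theorem cCoeff_nonneg (hβ : 1 < β) (hs : 0 ≤ s) (hα : -1 ≤ α) (hx : 2 ≤ x) :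
    0 ≤ cCoeff β s α x := by
  unfold cCoeff; apply div_nonneg <;> nlinarith

theorem dCoeff_nonneg (hβ : 1 < β) (hμ : 0 ≤ μ) (hx : 2 ≤ x) : 0 ≤ dCoeff β μ x := by
  unfold dCoeff; apply div_nonneg hμ; nlinarith

theorem cCoeff_add_dCoeff_le (hβ : 1 < β) (hs : 0 ≤ s) (hμ : 0 ≤ μ) (hα : α ≤ 1) (hx : 2 ≤ x) :
    cCoeff β s α x + dCoeff β μ x ≤ s + 1 + μ := by
  have hD : 1 ≤ x * (β + x - 1) := by nlinarith
  unfold cCoeff dCoeff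
  rw [← add_div, div_le_iff₀ (by linarith)]
  nlinarith

end Coefficients

theorem sub_one_rpow_le {x ε : ℝ} (hx : 1 ≤ x) (hε0 : 0 ≤ ε) (hε1 : ε ≤ 1) :
    (x - 1) ^ ε ≤ x ^ ε * (1 - ε / x) := by
  have hx0 : 0 < x := by linarith
  have hs : -1 ≤ -x⁻¹ := neg_le_neg (inv_le_one_of_one_le₀ hx)
  calc (x - 1) ^ ε = x ^ ε * (1 + -x⁻¹) ^ ε := by
        rw [← mul_rpow hx0.le (by linarith)]; congr 1; field_simp; ring
    _ ≤ x ^ ε * (1 + ε * -x⁻¹) := by gcongr; exact rpow_one_add_le_one_add_mul_self hs hε0 hε1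
    _ = x ^ ε * (1 - ε / x) := by ring

theorem cCoeff_dCoeff_numerator_le {β μ s α ε x : ℝ} (hβ : 1 < β) (hμ : 0 < μ) (hs : 0 ≤ s)
    (hε0 : 0 < ε) (hε1 : ε ≤ 1) (hα : α ≤ ε / 4) (hx6 : 6 ≤ x)
    (hx : β + 8 * (s + μ) ≤ 3 * ε / 4 * x) :
    (s + (x - 1) * (x + α + β - 2)) * (x - ε) * (x - 2) ^ 2 + μ * x * (x - 1) ^ 2
      ≤ (β + x - 1) * (x - 1) ^ 2 * (x - 2) ^ 2 := by
  have hdrift : (x + α + β - 2) * (x - ε) ≤ (x + β - 1) * (x - 1) - (3 * ε / 4 * x - β) := by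
    nlinarith [mul_le_mul_of_nonneg_right hα (show 0 ≤ x - ε by linarith)]
  have hsmall : (s + μ) * x ^ 3 ≤ (3 * ε / 4 * x - β) * (x - 1) * (x - 2) ^ 2 := by
    calc (s + μ) * x ^ 3 ≤ 8 * (s + μ) * (3 / 4 * x) * (x / 2) ^ 2 := by
          nlinarith [pow_pos (show 0 < x by linarith) 3]
      _ ≤ (3 * ε / 4 * x - β) * (x - 1) * (x - 2) ^ 2 := by
          have hf : 8 * (s + μ) ≤ 3 * ε / 4 * x - β := by linarith
          gcongr <;> nlinarith
  have hs3 : s * (x - ε) * (x - 2) ^ 2 ≤ s * x ^ 3 := by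
    have : (x - ε) * (x - 2) ^ 2 ≤ x * x ^ 2 := by gcongr <;> linarith
    nlinarith
  have hμ3 : μ * x * (x - 1) ^ 2 ≤ μ * x ^ 3 := by
    have : (x - 1) ^ 2 ≤ x ^ 2 := by gcongr <;> linarith
    nlinarith
  have := mul_le_mul_of_nonneg_right hdrift
    (mul_nonneg (by linarith : (0 : ℝ) ≤ x - 1) (sq_nonneg (x - 2)))
  nlinarith

theorem cCoeff_mul_add_dCoeff_mul_le_one {β μ s α ε x : ℝ} (hβ : 1 < β) (hμ : 0 < μ) (hs : 0 ≤ s)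
    (hε0 : 0 < ε) (hε1 : ε ≤ 1) (hα : α ≤ ε / 4) (hx6 : 6 ≤ x)
    (hx : β + 8 * (s + μ) ≤ 3 * ε / 4 * x) :
    cCoeff β s α x * (x * (x - ε) / (x - 1) ^ 2) + dCoeff β μ x * (x / (x - 2)) ^ 2 ≤ 1 := by
  have h1 : x - 1 ≠ 0 := by linarith
  have h2 : x - 2 ≠ 0 := by linarith
  have hD : 0 < β + x - 1 := by linarith
  unfold cCoeff dCoeff
  rw [show (s + (x - 1) * (x + α + β - 2)) / (x * (β + x - 1)) * (x * (x - ε) / (x - 1) ^ 2)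
      + μ / (x * (β + x - 1)) * (x / (x - 2)) ^ 2
      = ((s + (x - 1) * (x + α + β - 2)) * (x - ε) * (x - 2) ^ 2 + μ * x * (x - 1) ^ 2)
        / ((β + x - 1) * (x - 1) ^ 2 * (x - 2) ^ 2) by field_simp,
    div_le_one (mul_pos (mul_pos hD (pow_pos (by linarith) 2)) (pow_pos (by linarith) 2))]
  exact cCoeff_dCoeff_numerator_le hβ hμ hs hε0 hε1 hα hx6 hx

theorem cCoeff_mul_add_dCoeff_mul_rpow_le {β μ s α ε x : ℝ} (hβ : 1 < β) (hμ : 0 < μ)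
    (hs : 0 ≤ s) (hε0 : 0 < ε) (hε1 : ε ≤ 1) (hα₀ : -1 ≤ α) (hα : α ≤ ε / 4) (hx6 : 6 ≤ x)
    (hx : β + 8 * (s + μ) ≤ 3 * ε / 4 * x) :
    cCoeff β s α x * (x - 1) ^ (ε - 2) + dCoeff β μ x * (x - 2) ^ (ε - 2) ≤ x ^ (ε - 2) := by
  have hx0 : 0 < x := by linarith
  have hxε : x ^ (ε - 2) = x ^ ε / x ^ 2 := by rw [rpow_sub hx0, rpow_two]
  have h1 : (x - 1) ^ (ε - 2) ≤ x ^ (ε - 2) * (x * (x - ε) / (x - 1) ^ 2) := by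
    rw [rpow_sub (by linarith), rpow_two, hxε]
    calc (x - 1) ^ ε / (x - 1) ^ 2 ≤ x ^ ε * (1 - ε / x) / (x - 1) ^ 2 := by
          gcongr; exact sub_one_rpow_le (by linarith) hε0.le hε1
      _ = x ^ ε / x ^ 2 * (x * (x - ε) / (x - 1) ^ 2) := by field_simp
  have h2 : (x - 2) ^ (ε - 2) ≤ x ^ (ε - 2) * (x / (x - 2)) ^ 2 := by
    rw [rpow_sub (by linarith), rpow_two, hxε]
    calc (x - 2) ^ ε / (x - 2) ^ 2 ≤ x ^ ε / (x - 2) ^ 2 := by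
          gcongr <;> linarith
      _ = x ^ ε / x ^ 2 * (x / (x - 2)) ^ 2 := by field_simp
  have hc := cCoeff_nonneg (s := s) (α := α) hβ hs hα₀ (by linarith : 2 ≤ x)
  have hd := dCoeff_nonneg (μ := μ) hβ hμ.le (by linarith : 2 ≤ x)
  calc cCoeff β s α x * (x - 1) ^ (ε - 2) + dCoeff β μ x * (x - 2) ^ (ε - 2)
      ≤ cCoeff β s α x * (x ^ (ε - 2) * (x * (x - ε) / (x - 1) ^ 2))
        + dCoeff β μ x * (x ^ (ε - 2) * (x / (x - 2)) ^ 2) := by gcongr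
    _ = x ^ (ε - 2) * (cCoeff β s α x * (x * (x - ε) / (x - 1) ^ 2)
        + dCoeff β μ x * (x / (x - 2)) ^ 2) := by ring
    _ ≤ x ^ (ε - 2) := mul_le_of_le_one_right (by positivity)
        (cCoeff_mul_add_dCoeff_mul_le_one hβ hμ hs hε0 hε1 hα hx6 hx)

theorem one_le_sq_mul_rpow_sub_two {k K : ℕ} {ε : ℝ} (hk : 1 ≤ k) (hkK : k ≤ K) (hε : 0 ≤ ε) :
    1 ≤ (K : ℝ) ^ 2 * (k : ℝ) ^ (ε - 2) := by
  have hk1 : (1 : ℝ) ≤ k := by exact_mod_cast hk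
  have hkK' : (k : ℝ) ≤ K := by exact_mod_cast hkK
  rw [rpow_sub (by linarith), rpow_two]
  calc (1 : ℝ) ≤ (K / k) ^ 2 := one_le_pow₀ ((one_le_div (by linarith)).2 hkK')
    _ ≤ (K / k) ^ 2 * (k : ℝ) ^ ε := le_mul_of_one_le_right (by positivity) (one_le_rpow hk1 hε)
    _ = (K : ℝ) ^ 2 * ((k : ℝ) ^ ε / (k : ℝ) ^ 2) := by ring

theorem exists_abs_le_mul_rpow {β μ S ε : ℝ} (hβ : 1 < β) (hμ : 0 < μ) (hS : 0 ≤ S)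
    (hε0 : 0 < ε) (hε1 : ε ≤ 1) :
    ∃ C > 0, ∀ (s α : ℝ) (a : ℕ → ℝ), 0 ≤ s → s ≤ S → -1 ≤ α → α ≤ ε / 4 →
      a 0 = 1 → a 1 = s / β →
      (∀ k : ℕ, 2 ≤ k → a k = cCoeff β s α k * a (k - 1) - dCoeff β μ k * a (k - 2)) →
      ∀ k : ℕ, 1 ≤ k → |a k| ≤ C * (k : ℝ) ^ (ε - 2) := by
  obtain ⟨K, hK⟩ : ∃ K : ℕ, ∀ k : ℕ, K ≤ k → 6 ≤ (k : ℝ) ∧ β + 8 * (S + μ) ≤ 3 * ε / 4 * k :=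
    eventually_atTop.1 <| tendsto_natCast_atTop_atTop.eventually <| (eventually_ge_atTop 6).and <|
      (tendsto_id.const_mul_atTop (by positivity)).eventually_ge_atTop _
  have hK2 : 2 ≤ K := by exact_mod_cast (hK K le_rfl).1.trans' (by norm_num : (2 : ℝ) ≤ 6)
  set B := S + 1 + μ
  refine ⟨B ^ K * K ^ 2, by positivity, fun s α a hs hsS hα₀ hα h0 h1 hrec => ?_⟩
  have hk2 : ∀ k : ℕ, 2 ≤ k → (2 : ℝ) ≤ k := fun k hk => by exact_mod_cast hk
  have hp : ∀ k : ℕ, 2 ≤ k → 0 ≤ cCoeff β s α k := fun k hk => cCoeff_nonneg hβ hs hα₀ (hk2 k hk)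
  have hq : ∀ k : ℕ, 2 ≤ k → 0 ≤ dCoeff β μ k := fun k hk => dCoeff_nonneg hβ hμ.le (hk2 k hk)
  have habs : ∀ k : ℕ, 2 ≤ k →
      |a k| ≤ cCoeff β s α k * |a (k - 1)| + dCoeff β μ k * |a (k - 2)| := fun k hk => by
    rw [hrec k hk]; exact abs_mul_sub_mul_le (hp k hk) (hq k hk)
  have hpow : ∀ k, |a k| ≤ B ^ k := by
    refine abs_le_pow_of_abs_le_add (by linarith) (by simp [h0]) ?_ hp hq
      (fun k hk => (cCoeff_add_dCoeff_le hβ hs hμ.le (by linarith) (hk2 k hk)).trans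
        (by linarith)) habs
    rw [h1, abs_of_nonneg (by positivity)]
    exact (div_le_self hs hβ.le).trans (by linarith)
  refine abs_le_mul_of_abs_le_add hK2 (by positivity) hp hq habs (fun k hk => ?_)
    (fun k hk hkK => ?_)
  · obtain ⟨hk6, hkε⟩ := hK k hk.le
    have hcast : ((k - 1 : ℕ) : ℝ) = k - 1 ∧ ((k - 2 : ℕ) : ℝ) = k - 2 := by
      constructor <;> push_cast [Nat.cast_sub (by omega : 1 ≤ k), Nat.cast_sub (by omega : 2 ≤ k)]
        <;> ring
    rw [hcast.1, hcast.2]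
    exact cCoeff_mul_add_dCoeff_mul_rpow_le hβ hμ hs hε0 hε1 hα₀ hα hk6
      (hkε.trans' (by linarith))
  · calc |a k| ≤ B ^ K := (hpow k).trans (pow_le_pow_right₀ (by linarith) hkK)
      _ ≤ B ^ K * (K ^ 2 * (k : ℝ) ^ (ε - 2)) :=
        le_mul_of_one_le_right (by positivity) (one_le_sq_mul_rpow_sub_two hk hkK hε0.le)
      _ = B ^ K * K ^ 2 * (k : ℝ) ^ (ε - 2) := by ring

theorem stmt7_general (β μ lam : ℝ) (hβ : 1 < β) (hμ : 0 < μ)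
    (τ α : ℕ → ℝ)
    (hτ0 : Tendsto τ atTop (nhds 0)) (hα0 : Tendsto α atTop (nhds 0))
    (a : ℕ → ℕ → ℝ)
    (ha0 : ∀ n, a n 0 = 1)
    (ha1 : ∀ n, a n 1 = (lam * τ n + μ) / β)
    (harec : ∀ n, ∀ k : ℕ, 2 ≤ k →
      a n k = (lam * τ n + μ + ((k:ℝ) - 1) * ((k:ℝ) + α n + β - 2)) / ((k:ℝ) * (β + (k:ℝ) - 1))
                * a n (k - 1)
              - μ / ((k:ℝ) * (β + (k:ℝ) - 1)) * a n (k - 2)) :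
    ∀ ε > (0:ℝ), ∃ C > (0:ℝ), ∃ N : ℕ,
      ∀ n ≥ N, ∀ k : ℕ, 1 ≤ k → |a n k| ≤ C * (k:ℝ) ^ (-(2 - ε)) := by
  intro ε hε
  have hε' : 0 < min ε 1 := lt_min hε one_pos
  obtain ⟨C, hC, hbound⟩ := exists_abs_le_mul_rpow hβ hμ (by positivity : 0 ≤ 2 * μ) hε'
    (min_le_right ε 1)
  have hs : Tendsto (fun n => lam * τ n + μ) atTop (nhds μ) := by
    simpa using (hτ0.const_mul lam).add_const μ
  obtain ⟨N, hN⟩ := eventually_atTop.1 <|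
    (hs.eventually_mem (Icc_mem_nhds (by linarith : 0 < μ) (by linarith : μ < 2 * μ))).and
      (hα0.eventually_mem
        (Icc_mem_nhds (by norm_num : (-1 : ℝ) < 0) (by positivity : (0 : ℝ) < min ε 1 / 4)))
  refine ⟨C, hC, N, fun n hn k hk => ?_⟩
  obtain ⟨⟨hs0, hsS⟩, hα₀, hα⟩ := hN n hn
  calc |a n k| ≤ C * (k : ℝ) ^ (min ε 1 - 2) :=
        hbound _ _ (a n) hs0 hsS hα₀ hα (ha0 n) (ha1 n) (harec n) k hk
    _ ≤ C * (k : ℝ) ^ (-(2 - ε)) := by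
        gcongr
        · exact_mod_cast hk
        · linarith [min_le_left ε 1]

theorem stmt7 (β μ lam : ℝ) (hβ : 1 < β) (hμ : 0 < μ) (hlam : 0 < lam)
    (τ α : ℕ → ℝ) (hτpos : ∀ n, 0 < τ n) (hαpos : ∀ n, 0 < α n)
    (hτ0 : Tendsto τ atTop (nhds 0)) (hα0 : Tendsto α atTop (nhds 0))
    (hτ1 : ∀ n, τ n < 1) (hsup : BddAbove (Set.range fun n => lam * τ n))
    (a : ℕ → ℕ → ℝ)
    (ha0 : ∀ n, a n 0 = 1)
    (ha1 : ∀ n, a n 1 = (lam * τ n + μ) / β)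
    (harec : ∀ n, ∀ k : ℕ, 2 ≤ k →
      a n k = (lam * τ n + μ + ((k:ℝ) - 1) * ((k:ℝ) + α n + β - 2)) / ((k:ℝ) * (β + (k:ℝ) - 1))
                * a n (k - 1)
              - μ / ((k:ℝ) * (β + (k:ℝ) - 1)) * a n (k - 2)) :
    ∀ ε > (0:ℝ), ∃ C > (0:ℝ), ∃ N : ℕ,
      ∀ n ≥ N, ∀ k : ℕ, 1 ≤ k → |a n k| ≤ C * (k:ℝ) ^ (-(2 - ε)) :=
  stmt7_general β μ lam hβ hμ τ α hτ0 hα0 a ha0 ha1 harec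
end
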